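/- Suppose μ < κ < λ are regular with λ inaccessible and δ^{<κ} = δ for all regular δ ∈ (κ, λ). Then the Laver collapse L(μ, λ) is forcing-equivalent to L(κ, λ) × Col(μ, κ) × L(μ, κ); that is, there is a dense embedding from a dense subset of L(μ, λ) into the product L(μ, κ) × Col(μ, κ) × L(κ, λ). -/

import Mathlib

open Ordinal Cardinal Set

/-- A partial function on ordinals, as an `Option`-valued function. -/
abbrev PartFun := Ordinal.{0} → Option Ordinal.{0}

/-- A Laver-collapse condition is a partial function assigning partial functions to ordinals. -/
abbrev LaverFun := Ordinal → Option PartFun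

/-- `δ` is a regular cardinal (as an ordinal). -/
def IsRegOrd (δ : Ordinal) : Prop := δ.card.IsRegular ∧ δ.card.ord = δ

/-- Domain of a partial function. -/
def pdom (g : PartFun) : Set Ordinal := {a | (g a).isSome}

/-- Domain of a Laver condition. -/
def ldom (p : LaverFun) : Set Ordinal := {δ | (p δ).isSome}

/-- An Easton set: bounded below every regular cardinal. -/
def IsEaston (X : Set Ordinal) : Prop := ∀ α, IsRegOrd α → sSup (X ∩ Set.Iio α) < α

/-- Laver condition with bound below `μ` and whose domain consists of regular cardinals in `S`. -/
def IsLaverOn (μ : Ordinal) (S : Set Ordinal) (p : LaverFun) : Prop :=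
  (∀ δ ∈ ldom p, IsRegOrd δ ∧ δ ∈ S) ∧ IsEaston (ldom p) ∧
    ∃ ξ < μ, ∀ δ g, p δ = some g → ∀ a b, g a = some b → a < ξ ∧ b < δ

/-- A condition of the Laver collapse `𝕃(μ, λ)`. -/
def IsLaver (μ lam : Ordinal) (p : LaverFun) : Prop := IsLaverOn μ (Set.Ioo μ lam) p

/-- Extension of partial functions: `g'` extends `g`. -/
def PFunLE (g' g : PartFun) : Prop := ∀ a b, g a = some b → g' a = some b

/-- The Laver collapse order: `p` extends `q`. -/
def LaverLE (p q : LaverFun) : Prop :=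
  ∀ δ g, q δ = some g → ∃ g', p δ = some g' ∧ PFunLE g' g

/-- A condition of the collapse `Col(μ, κ)`: a partial function from `μ` to `κ` of size `< μ`. -/
def IsCol (μ κ : Ordinal) (g : PartFun) : Prop :=
  (∀ a b, g a = some b → a < μ ∧ b < κ) ∧ Cardinal.mk (pdom g) < Cardinal.lift.{1} μ.card

/-!
Work in the dense set of conditions `p` with `κ ∈ dom p` all of whose coordinates have the same
domain `ξ < μ`. The coordinate `c = p(κ)` is a `Col(μ, κ)`-condition, and it determines a normal
sequence `b_i < κ` (`i ≤ ξ`) with `c(i) < b_(i+1)`, splitting `b_ξ` into the blocks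
`[b_i, b_(i+1))`. For a regular `δ ∈ (κ, λ)`, `δ^{<κ} = δ` gives a bijective enumeration of the
functions from a block to `δ` by the ordinals below `δ`, so `p(δ) : ξ → δ` codes a partial function
from `b_ξ < κ` to `δ`, that is, an `𝕃(κ, λ)`-coordinate. Since extending `c` does not move the
blocks already there, splitting `p` into `p ↾ κ`, `p(κ)` and the decoded part above `κ` preserves
and reflects the order; the image is dense because `c` can be extended so that `b_ξ` exceeds any
prescribed bound below `κ`.
-/

theorem IsRegOrd.isSuccLimit {α : Ordinal} (h : IsRegOrd α) : Order.IsSuccLimit α :=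
  h.2 ▸ Cardinal.isSuccLimit_ord h.1.aleph0_le

theorem IsRegOrd.pos {α : Ordinal} (h : IsRegOrd α) : 0 < α := h.isSuccLimit.bot_lt

theorem isRegOrd_ord {c : Cardinal} (h : c.IsRegular) : IsRegOrd c.ord :=
  ⟨by rwa [Cardinal.card_ord], by rw [Cardinal.card_ord]⟩

theorem IsCol.exists_bound {μ κ : Ordinal} {g : PartFun} (hμ : IsRegOrd μ) (hg : IsCol μ κ g) :
    ∃ ξ < μ, ∀ a b, g a = some b → a < ξ := by
  have hdom : ∀ a ∈ pdom g, a < μ := fun a ha => by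
    obtain ⟨b, hb⟩ := Option.isSome_iff_exists.1 ha
    exact (hg.1 a b hb).1
  refine ⟨sSup (pdom g) + 1, hμ.isSuccLimit.add_one_lt (Ordinal.sSup_lt_of_lt_cof ?_ hdom),
    fun a b hab => Order.lt_add_one_iff.2 (le_csSup ⟨μ, fun a ha => (hdom a ha).le⟩ ?_)⟩
  · rw [← Ordinal.lift_cof, ← hμ.2, hμ.1.cof_ord]
    exact hg.2
  · simp [pdom, hab]

/-! ### Easton sets -/

section Easton

variable {S T X Y : Set Ordinal}

theorem IsEaston.mono (hY : IsEaston Y) (h : X ⊆ Y) : IsEaston X := fun α hα =>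
  (csSup_le_csSup' ⟨α, fun _ hx => hx.2.le⟩ (inter_subset_inter_left _ h)).trans_lt (hY α hα)

theorem IsEaston.union (hX : IsEaston X) (hY : IsEaston Y) : IsEaston (X ∪ Y) := by
  intro α hα
  refine (csSup_le' fun x hx => ?_).trans_lt (max_lt (hX α hα) (hY α hα))
  obtain ⟨hx | hx, hxα⟩ := hx
  · exact le_max_of_le_left (le_csSup ⟨α, fun _ hy => hy.2.le⟩ ⟨hx, hxα⟩)
  · exact le_max_of_le_right (le_csSup ⟨α, fun _ hy => hy.2.le⟩ ⟨hx, hxα⟩)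

theorem isEaston_singleton (x : Ordinal) : IsEaston {x} := by
  intro α hα
  rcases lt_or_ge x α with h | h
  · exact (csSup_le' fun y hy => hy.1.le).trans_lt h
  · rw [show ({x} ∩ Iio α : Set Ordinal) = ∅ by ext y; simp; rintro rfl; exact h, csSup_empty]
    exact hα.pos

theorem IsEaston.insert (hX : IsEaston X) (x : Ordinal) : IsEaston (insert x X) :=
  insert_eq x X ▸ (isEaston_singleton x).union hX

def IsEastonIn (S X : Set Ordinal) : Prop := (∀ δ ∈ X, IsRegOrd δ ∧ δ ∈ S) ∧ IsEaston X

theorem IsEastonIn.mono_left (h : IsEastonIn S X) (hST : S ⊆ T) : IsEastonIn T X :=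
  ⟨fun δ hδ => ⟨(h.1 δ hδ).1, hST (h.1 δ hδ).2⟩, h.2⟩

theorem IsEastonIn.inter (h : IsEastonIn S X) (T : Set Ordinal) : IsEastonIn (S ∩ T) (X ∩ T) :=
  ⟨fun δ hδ => ⟨(h.1 δ hδ.1).1, (h.1 δ hδ.1).2, hδ.2⟩, h.2.mono inter_subset_left⟩

theorem IsEastonIn.union (hX : IsEastonIn S X) (hY : IsEastonIn S Y) : IsEastonIn S (X ∪ Y) :=
  ⟨fun δ hδ => hδ.elim (hX.1 δ) (hY.1 δ), hX.2.union hY.2⟩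

theorem IsEastonIn.insert (h : IsEastonIn S X) {κ : Ordinal} (hκ : IsRegOrd κ) (hκS : κ ∈ S) :
    IsEastonIn S (insert κ X) :=
  ⟨fun δ hδ => hδ.elim (fun h => h ▸ ⟨hκ, hκS⟩) (h.1 δ), h.2.insert κ⟩

end Easton

def IsFunOn (A : Set Ordinal) (δ : Ordinal) (g : PartFun) : Prop :=
  pdom g = A ∧ ∀ a b, g a = some b → b < δ

section PartFun

variable {A : Set Ordinal} {δ ξ a b : Ordinal} {g g' : PartFun}

theorem IsFunOn.isSome_iff (hg : IsFunOn A δ g) : (g a).isSome ↔ a ∈ A := by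
  rw [← hg.1]; rfl

theorem IsFunOn.mem (hg : IsFunOn A δ g) (h : g a = some b) : a ∈ A :=
  hg.isSome_iff.1 (by simp [h])

theorem IsFunOn.eq_of_pfunLE {δ' : Ordinal} (hg : IsFunOn A δ g) (hg' : IsFunOn A δ' g')
    (h : PFunLE g' g) : g' = g := by
  funext a
  cases hga : g a with
  | some b => exact h a b hga
  | none =>
    rw [← Option.not_isSome_iff_eq_none, hg'.isSome_iff, ← hg.isSome_iff, hga]
    simp

theorem PFunLE.pdom_subset (h : PFunLE g' g) : pdom g ⊆ pdom g' := by
  intro a ha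
  obtain ⟨b, hb⟩ := Option.isSome_iff_exists.1 ha
  simp [pdom, h a b hb]

theorem PFunLE.eqOn_Iio (h : PFunLE g' g) (hg : pdom g = Iio ξ) : ∀ j < ξ, g' j = g j := by
  intro j hj
  obtain ⟨b, hb⟩ := Option.isSome_iff_exists.1 (show j ∈ pdom g from hg ▸ hj)
  rw [hb, h j b hb]

open Classical in
noncomputable def fillOn (A : Set Ordinal) (g : PartFun) : PartFun := fun a =>
  if a ∈ A then some ((g a).getD 0) else none

theorem pdom_fillOn (A : Set Ordinal) (g : PartFun) : pdom (fillOn A g) = A := by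
  ext a
  by_cases ha : a ∈ A <;> simp [pdom, fillOn, ha]

theorem isFunOn_fillOn (hδ : 0 < δ) (hg : ∀ a b, g a = some b → b < δ) :
    IsFunOn A δ (fillOn A g) := by
  refine ⟨pdom_fillOn A g, fun a b hab => ?_⟩
  by_cases ha : a ∈ A
  · simp only [fillOn, ha, if_true, Option.some_inj] at hab
    cases hga : g a with
    | none => simpa [hga, ← hab] using hδ
    | some b' => simpa [hga, ← hab] using hg a b' hga
  · simp [fillOn, ha] at hab

theorem fillOn_of_mem (ha : a ∈ A) (h : g a = some b) : fillOn A g a = some b := by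
  simp [fillOn, ha, h]

end PartFun

/-! ### Enumerations of the functions `A → δ` -/

open Classical in
noncomputable def funOnEquiv (A : Set Ordinal) (δ : Ordinal) :
    {g // IsFunOn A δ g} ≃ (A → Iio δ) where
  toFun g x := ⟨(g.1 x).get (g.2.isSome_iff.2 x.2), g.2.2 _ _ (Option.some_get _).symm⟩
  invFun f := ⟨fun a => if h : a ∈ A then some (f ⟨a, h⟩).1 else none, by
    refine ⟨Set.ext fun a => ?_, fun a b hab => ?_⟩
    · by_cases h : a ∈ A <;> simp [pdom, h]
    · by_cases h : a ∈ A
      · simp only [h, dif_pos, Option.some_inj] at hab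
        exact hab ▸ (f ⟨a, h⟩).2
      · simp [h] at hab⟩
  left_inv g := by
    ext1; funext a
    by_cases h : a ∈ A
    · simp [h]
    · simp only [h, dif_neg, not_false_eq_true]
      exact (Option.not_isSome_iff_eq_none.1 (mt g.2.isSome_iff.1 h)).symm
  right_inv f := by
    funext x
    simp [x.2]

theorem mk_isFunOn_Ico {κ : Cardinal} {δ s t : Ordinal} (hδ : δ ≠ 0)
    (hpow : δ.card ^< κ = δ.card) (hst : s < t) (htκ : t < κ.ord) :
    #{g // IsFunOn (Ico s t) δ g} = #(Iio δ) := by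
  have hA : #(Ico s t) ≤ Cardinal.lift.{1} t.card :=
    Cardinal.mk_Iio_ordinal t ▸ Cardinal.mk_le_mk_of_subset Ico_subset_Iio_self
  have hδpow : δ.card ^ t.card = δ.card :=
    le_antisymm ((Cardinal.le_powerlt _ (Cardinal.lt_ord.1 htκ)).trans_eq hpow)
      (Cardinal.self_le_power _ (Cardinal.one_le_iff_ne_zero.2 (by simpa using hst.bot_lt.ne')))
  rw [Cardinal.mk_congr (funOnEquiv _ _), ← Cardinal.power_def, Cardinal.mk_Iio_ordinal]
  refine le_antisymm ?_ (Cardinal.self_le_power _ ?_)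
  · calc Cardinal.lift.{1} δ.card ^ #(Ico s t)
        ≤ Cardinal.lift.{1} δ.card ^ Cardinal.lift.{1} t.card :=
          Cardinal.power_le_power_left (by simpa [← Ordinal.lift_card] using hδ) hA
      _ = Cardinal.lift.{1} δ.card := by rw [← Cardinal.lift_power, hδpow]
  · exact Cardinal.one_le_iff_ne_zero.2 (Cardinal.mk_ne_zero_iff.2 ⟨⟨s, le_rfl, hst⟩⟩)

def HasEnum (δ : Ordinal) (A : Set Ordinal) : Prop := Nonempty (Iio δ ≃ {g // IsFunOn A δ g})

def HasEnumsBelow (κ δ : Ordinal) : Prop := ∀ s t, s < t → t < κ → HasEnum δ (Ico s t)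

theorem hasEnumsBelow_of_powerlt {κ : Cardinal} {δ : Ordinal} (hδ : δ ≠ 0)
    (hpow : δ.card ^< κ = δ.card) : HasEnumsBelow κ.ord δ := fun _ _ hst htκ =>
  Cardinal.eq.1 (mk_isFunOn_Ico hδ hpow hst htκ).symm

open Classical in
/-- The fixed enumeration `⟨f_v : v < δ⟩` of the functions `A → δ`; when there is no such
enumeration, or `δ ≤ v`, the value is the empty function. -/
noncomputable def enumFun (δ : Ordinal) (A : Set Ordinal) (v : Ordinal) : PartFun :=
  if h : HasEnum δ A ∧ v < δ then (h.1.some ⟨v, h.2⟩).1 else fun _ => none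

open Classical in
noncomputable def enumIdx (δ : Ordinal) (A : Set Ordinal) (g : PartFun) : Ordinal :=
  if h : HasEnum δ A ∧ IsFunOn A δ g then (h.1.some.symm ⟨g, h.2⟩).1 else 0

section enum

variable {δ v a b : Ordinal} {A : Set Ordinal} {g : PartFun}

theorem enumFun_eq_some (h : enumFun δ A v a = some b) : a ∈ A ∧ b < δ := by
  unfold enumFun at h
  split_ifs at h with hv
  have hf := (hv.1.some ⟨v, hv.2⟩).2
  exact ⟨hf.mem h, hf.2 a b h⟩

theorem isFunOn_enumFun (h : HasEnum δ A) (hv : v < δ) : IsFunOn A δ (enumFun δ A v) := by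
  rw [enumFun, dif_pos ⟨h, hv⟩]
  exact Subtype.prop _

theorem enumFun_injOn (h : HasEnum δ A) : InjOn (enumFun δ A) (Iio δ) := by
  intro v (hv : v < δ) w (hw : w < δ) hvw
  rw [enumFun, enumFun, dif_pos (And.intro h hv), dif_pos (And.intro h hw)] at hvw
  exact congrArg Subtype.val (h.some.injective (Subtype.ext hvw))

theorem enumIdx_lt (hδ : 0 < δ) : enumIdx δ A g < δ := by
  unfold enumIdx
  split_ifs
  exacts [Subtype.prop _, hδ]

theorem enumFun_enumIdx (h : HasEnum δ A) (hg : IsFunOn A δ g) :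
    enumFun δ A (enumIdx δ A g) = g := by
  have hv : enumIdx δ A g < δ := by
    rw [enumIdx, dif_pos ⟨h, hg⟩]
    exact Subtype.prop _
  rw [enumFun, dif_pos ⟨h, hv⟩]
  simp [enumIdx, dif_pos (And.intro h hg)]

end enum

/-! ### The blocks determined by a collapse condition -/

/-- For `c = p(κ)`, the ordinals `blockStart c i` play the role of the club `C_p`. -/
noncomputable def blockStart (c : PartFun) (i : Ordinal.{0}) : Ordinal.{0} :=
  ⨆ j : Iio i, max (blockStart c j + 1) ((c j).getD 0 + 1)
termination_by i
decreasing_by exact j.2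

namespace blockStart

variable {c c' : PartFun} {i j : Ordinal}

theorem le_of_lt (h : j < i) : max (blockStart c j + 1) ((c j).getD 0 + 1) ≤ blockStart c i := by
  conv_rhs => rw [blockStart]
  exact Ordinal.le_iSup (fun k : Iio i => max (blockStart c k + 1) ((c k).getD 0 + 1)) ⟨j, h⟩

theorem strictMono (c : PartFun) : StrictMono (blockStart c) := fun _ _ h =>
  (Order.lt_add_one_iff.2 le_rfl).trans_le ((le_max_left _ _).trans (le_of_lt h))

theorem isNormal (c : PartFun) : Order.IsNormal (blockStart c) := by
  refine Order.isNormal_iff.2 ⟨strictMono c, fun o ho a ha => ?_⟩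
  rw [blockStart]
  exact Ordinal.iSup_le fun j => (le_of_lt (Order.lt_succ j.1)).trans (ha _ (ho.succ_lt j.2))

@[simp] theorem zero : blockStart c 0 = 0 := by
  rw [blockStart]; simp

theorem getD_lt (h : j < i) : (c j).getD 0 < blockStart c i :=
  (Order.lt_add_one_iff.2 le_rfl).trans_le ((le_max_right _ _).trans (le_of_lt h))

theorem congr (h : ∀ j < i, c j = c' j) : blockStart c i = blockStart c' i := by
  induction i using WellFoundedLT.induction with
  | ind i ih =>
    rw [blockStart, blockStart]
    congr! 4 with j
    · exact ih j j.2 fun k hk => h k (hk.trans j.2)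
    · rw [h j j.2]

theorem lt_of_isRegOrd {κ : Ordinal} (hκ : IsRegOrd κ) (hc : ∀ j b, c j = some b → b < κ)
    (hi : i < κ) : blockStart c i < κ := by
  induction i using WellFoundedLT.induction with
  | ind i ih =>
    have hlim := hκ.isSuccLimit
    rw [blockStart]
    refine Ordinal.lift_iSup_lt_of_lt_cof ?_ fun j =>
      max_lt (hlim.add_one_lt (ih j j.2 (j.2.trans hi))) (hlim.add_one_lt ?_)
    · rw [Cardinal.mk_Iio_ordinal, ← Ordinal.lift_cof, ← hκ.2, hκ.1.cof_ord]
      simpa [← Ordinal.lift_card] using Cardinal.lt_ord.1 (hκ.2.symm ▸ hi)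
    · cases h : c j with
      | none => exact hlim.bot_lt
      | some b => exact hc j b h

end blockStart

def block (c : PartFun) (i : Ordinal) : Set Ordinal := Ico (blockStart c i) (blockStart c (i + 1))

section block

variable {c c' : PartFun} {a i j : Ordinal}

theorem exists_mem_block (c : PartFun) (a : Ordinal) : ∃ i, a ∈ block c i := by
  obtain ⟨i, hi⟩ := (blockStart.isNormal c).exists_map_le_lt_map_succ (x := a) (by simp)
  exact ⟨i, by rwa [block, ← Order.succ_eq_add_one]⟩

theorem block_unique (hi : a ∈ block c i) (hj : a ∈ block c j) : i = j := by
  have hc {x y : Ordinal} : blockStart c x < blockStart c y ↔ x < y :=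
    (blockStart.strictMono c).lt_iff_lt
  exact le_antisymm (Order.lt_add_one_iff.1 (hc.1 (hi.1.trans_lt hj.2)))
    (Order.lt_add_one_iff.1 (hc.1 (hj.1.trans_lt hi.2)))

theorem exists_lt_of_lt_blockStart {ξ : Ordinal} (h : a < blockStart c ξ) :
    ∃ i < ξ, a ∈ block c i := by
  obtain ⟨i, hi⟩ := exists_mem_block c a
  exact ⟨i, (blockStart.strictMono c).lt_iff_lt.1 (hi.1.trans_lt h), hi⟩

theorem block_congr (h : ∀ j < i + 1, c j = c' j) : block c i = block c' i := by
  rw [block, block, blockStart.congr h,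
    blockStart.congr fun j hj => h j (hj.trans (Order.lt_add_one_iff.2 le_rfl))]

theorem hasEnum_block {κ δ : Ordinal} (hκ : IsRegOrd κ) (hc : ∀ j b, c j = some b → b < κ)
    (henum : HasEnumsBelow κ δ) (hi : i < κ) : HasEnum δ (block c i) :=
  henum _ _ (blockStart.strictMono c (Order.lt_add_one_iff.2 le_rfl))
    (blockStart.lt_of_isRegOrd hκ hc (hκ.isSuccLimit.add_one_lt hi))

end block

noncomputable def blockOf (c : PartFun) (a : Ordinal) : Ordinal := (exists_mem_block c a).choose

theorem blockOf_eq {c : PartFun} {a i : Ordinal} (h : a ∈ block c i) : blockOf c a = i :=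
  block_unique (exists_mem_block c a).choose_spec h

/-! ### Coding an `𝕃(κ, λ)`-coordinate by a function on the blocks -/

/-- A function `u : ξ → δ` codes the partial function whose restriction to the `i`-th block
is `f_{u i}`. -/
noncomputable def blockDecode (δ : Ordinal) (c u : PartFun) : PartFun := fun a =>
  (u (blockOf c a)).bind fun v => enumFun δ (block c (blockOf c a)) v a

noncomputable def blockEncode (δ ξ : Ordinal) (c T : PartFun) : PartFun := fun i =>
  if i < ξ then some (enumIdx δ (block c i) (fillOn (block c i) T)) else none

section blockCoding

variable {δ ξ : Ordinal} {c c' u u' T : PartFun}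

theorem pdom_blockEncode (δ ξ : Ordinal) (c T : PartFun) : pdom (blockEncode δ ξ c T) = Iio ξ := by
  ext i
  by_cases hi : i < ξ <;> simp [pdom, blockEncode, hi]

theorem blockEncode_bound (hδ : 0 < δ) {i v : Ordinal} (h : blockEncode δ ξ c T i = some v) :
    i < ξ ∧ v < δ := by
  unfold blockEncode at h
  split_ifs at h with hi
  exact ⟨hi, Option.some_inj.1 h ▸ enumIdx_lt hδ⟩

theorem blockDecode_of_mem {a i : Ordinal} (ha : a ∈ block c i) :
    blockDecode δ c u a = (u i).bind fun v => enumFun δ (block c i) v a := by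
  rw [blockDecode, blockOf_eq ha]

theorem blockDecode_eq_some_iff {a b : Ordinal} :
    blockDecode δ c u a = some b ↔ ∃ i v, u i = some v ∧ enumFun δ (block c i) v a = some b := by
  refine ⟨fun h => ?_, fun ⟨i, v, hv, hb⟩ => ?_⟩
  · obtain ⟨v, hv, hb⟩ := Option.bind_eq_some_iff.1 h
    exact ⟨_, v, hv, hb⟩
  · rw [blockDecode_of_mem (enumFun_eq_some hb).1, hv]
    exact hb

theorem blockDecode_bound (hu : ∀ i v, u i = some v → i < ξ) {a b : Ordinal}
    (h : blockDecode δ c u a = some b) : a < blockStart c ξ ∧ b < δ := by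
  obtain ⟨i, v, hv, hb⟩ := blockDecode_eq_some_iff.1 h
  obtain ⟨ha, hbδ⟩ := enumFun_eq_some hb
  exact ⟨ha.2.trans_le ((blockStart.strictMono c).monotone (Order.add_one_le_of_lt (hu i v hv))),
    hbδ⟩

theorem blockDecode_mono (hc : ∀ j < ξ, c' j = c j) (hu : PFunLE u' u)
    (hdom : ∀ i v, u i = some v → i < ξ) : PFunLE (blockDecode δ c' u') (blockDecode δ c u) := by
  intro a b h
  obtain ⟨i, v, hv, hb⟩ := blockDecode_eq_some_iff.1 h
  refine blockDecode_eq_some_iff.2 ⟨i, v, hu i v hv, ?_⟩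
  rwa [block_congr fun j hj => hc j (hj.trans_le (Order.add_one_le_of_lt (hdom i v hv)))]

/-- Decoding reflects extension, because the enumerations are injective and the coded
functions are total on their blocks. -/
theorem pfunLE_of_blockDecode (henum : ∀ i < ξ, HasEnum δ (block c i))
    (hc : ∀ j < ξ, c' j = c j) (hu : ∀ i v, u i = some v → i < ξ ∧ v < δ)
    (hu' : ∀ i < ξ, ∃ v < δ, u' i = some v)
    (h : PFunLE (blockDecode δ c' u') (blockDecode δ c u)) : PFunLE u' u := by
  intro i v hv
  obtain ⟨hi, hvδ⟩ := hu i v hv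
  obtain ⟨v', hv'δ, hv'⟩ := hu' i hi
  have hblock : block c' i = block c i :=
    block_congr fun j hj => hc j (hj.trans_le (Order.add_one_le_of_lt hi))
  have hle : PFunLE (enumFun δ (block c i) v') (enumFun δ (block c i) v) := by
    intro a b hab
    have hdec := h a b (blockDecode_eq_some_iff.2 ⟨i, v, hv, hab⟩)
    rwa [blockDecode_of_mem (hblock ▸ (enumFun_eq_some hab).1), hv', Option.bind_some,
      hblock] at hdec
  have hfun := (isFunOn_enumFun (henum i hi) hvδ).eq_of_pfunLE
    (isFunOn_enumFun (henum i hi) hv'δ) hle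
  rw [hv', enumFun_injOn (henum i hi) hv'δ hvδ hfun]

theorem blockDecode_blockEncode (henum : ∀ i < ξ, HasEnum δ (block c i))
    (hT : ∀ a b, T a = some b → a < blockStart c ξ ∧ b < δ) :
    PFunLE (blockDecode δ c (blockEncode δ ξ c T)) T := by
  intro a b hab
  obtain ⟨haξ, hbδ⟩ := hT a b hab
  obtain ⟨i, hi, ha⟩ := exists_lt_of_lt_blockStart haξ
  have hfill : IsFunOn (block c i) δ (fillOn (block c i) T) :=
    isFunOn_fillOn (zero_le.trans_lt hbδ) fun a b h => (hT a b h).2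
  refine blockDecode_eq_some_iff.2 ⟨i, _, if_pos hi, ?_⟩
  rw [enumFun_enumIdx (henum i hi) hfill]
  exact fillOn_of_mem ha hab

end blockCoding

def LaverBound (ξ : Ordinal) (p : LaverFun) : Prop :=
  ∀ δ g, p δ = some g → ∀ a b, g a = some b → a < ξ ∧ b < δ

theorem isLaverOn_iff {μ : Ordinal} {S : Set Ordinal} {p : LaverFun} :
    IsLaverOn μ S p ↔ IsEastonIn S (ldom p) ∧ ∃ ξ < μ, LaverBound ξ p :=
  and_assoc.symm

theorem LaverLE.trans {p q r : LaverFun} (hpq : LaverLE p q) (hqr : LaverLE q r) : LaverLE p r := by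
  intro δ g hg
  obtain ⟨g₁, hg₁, h₁⟩ := hqr δ g hg
  obtain ⟨g₂, hg₂, h₂⟩ := hpq δ g₁ hg₁
  exact ⟨g₂, hg₂, fun a b h => h₂ a b (h₁ a b h)⟩

theorem LaverBound.mono {ξ ξ' : Ordinal} {p : LaverFun} (h : LaverBound ξ p) (hξ : ξ ≤ ξ') :
    LaverBound ξ' p :=
  fun δ g hg a b hab => ⟨(h δ g hg a b hab).1.trans_le hξ, (h δ g hg a b hab).2⟩

/-! ### Operations on Laver conditions -/

namespace Laver

open Classical in
noncomputable def restrict (S : Set Ordinal) (p : LaverFun) : LaverFun := fun δ =>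
  if δ ∈ S then p δ else none

def map (F : Ordinal → PartFun → PartFun) (p : LaverFun) : LaverFun := fun δ => (p δ).map (F δ)

def union (p q : LaverFun) : LaverFun := fun δ => (p δ).or (q δ)

variable {S : Set Ordinal} {F F' : Ordinal → PartFun → PartFun} {p q : LaverFun} {ξ : Ordinal}

theorem restrict_of_mem {δ : Ordinal} (h : δ ∈ S) : restrict S p δ = p δ := if_pos h

theorem restrict_eq_some {δ : Ordinal} {g : PartFun} :
    restrict S p δ = some g ↔ δ ∈ S ∧ p δ = some g := by
  by_cases h : δ ∈ S <;> simp [restrict, h]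

theorem ldom_restrict : ldom (restrict S p) = ldom p ∩ S := by
  ext δ; by_cases h : δ ∈ S <;> simp [ldom, restrict, h]

@[simp] theorem ldom_map : ldom (map F p) = ldom p := by
  ext δ; simp [ldom, map]

theorem ldom_union : ldom (union p q) = ldom p ∪ ldom q := by
  ext δ; simp [ldom, union]

theorem ldom_update {κ : Ordinal} {c : PartFun} :
    ldom (Function.update p κ (some c)) = insert κ (ldom p) := by
  ext δ; by_cases h : δ = κ <;> simp [ldom, Function.update_apply, h]

theorem laverBound_restrict (h : LaverBound ξ p) : LaverBound ξ (restrict S p) :=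
  fun δ g hg => h δ g (restrict_eq_some.1 hg).2

theorem laverBound_map (h : ∀ δ g, p δ = some g → ∀ a b, F δ g a = some b → a < ξ ∧ b < δ) :
    LaverBound ξ (map F p) := by
  intro δ g hg
  obtain ⟨g₀, hg₀, rfl⟩ := Option.map_eq_some_iff.1 hg
  exact h δ g₀ hg₀

theorem laverBound_union (hp : LaverBound ξ p) (hq : LaverBound ξ q) :
    LaverBound ξ (union p q) := by
  intro δ g hg
  cases hpδ : p δ with
  | none => exact hq δ g (by simpa [union, hpδ] using hg)
  | some g' => exact hp δ g (by simpa [union, hpδ] using hg)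

theorem laverBound_update (hp : LaverBound ξ p) {κ : Ordinal} {c : PartFun}
    (hc : ∀ a b, c a = some b → a < ξ ∧ b < κ) : LaverBound ξ (Function.update p κ (some c)) := by
  intro δ g hg
  by_cases h : δ = κ
  · subst h
    simp only [Function.update_self, Option.some_inj] at hg
    exact hg ▸ hc
  · exact hp δ g (by simpa [Function.update_apply, h] using hg)

theorem restrict_mono (h : LaverLE p q) : LaverLE (restrict S p) (restrict S q) := by
  intro δ g hg
  obtain ⟨hδ, hg⟩ := restrict_eq_some.1 hg
  rw [restrict_of_mem hδ]
  exact h δ g hg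

theorem map_mono (h : LaverLE p q)
    (hF : ∀ δ g g', q δ = some g → p δ = some g' → PFunLE g' g → PFunLE (F' δ g') (F δ g)) :
    LaverLE (map F' p) (map F q) := by
  intro δ g hg
  obtain ⟨g₀, hg₀, rfl⟩ := Option.map_eq_some_iff.1 hg
  obtain ⟨g₀', hg₀', hle⟩ := h δ g₀ hg₀
  exact ⟨_, by simp [map, hg₀'], hF δ g₀ g₀' hg₀ hg₀' hle⟩

noncomputable def fill (ξ : Ordinal) (p : LaverFun) : LaverFun := map (fun _ => fillOn (Iio ξ)) p

def HasWidth (ξ : Ordinal) (p : LaverFun) : Prop := ∀ δ g, p δ = some g → pdom g = Iio ξ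

theorem HasWidth.lt {δ i v : Ordinal} {g : PartFun} (hw : HasWidth ξ p) (hg : p δ = some g)
    (hv : g i = some v) : i < ξ := by
  have hi : i ∈ pdom g := by simp [pdom, hv]
  rwa [hw δ g hg] at hi

theorem hasWidth_map (h : ∀ δ g, pdom (F δ g) = Iio ξ) : HasWidth ξ (map F p) := by
  intro δ g hg
  obtain ⟨g₀, -, rfl⟩ := Option.map_eq_some_iff.1 hg
  exact h δ g₀

theorem hasWidth_fill : HasWidth ξ (fill ξ p) :=
  hasWidth_map fun _ g => pdom_fillOn _ g

theorem hasWidth_union (hp : HasWidth ξ p) (hq : HasWidth ξ q) : HasWidth ξ (union p q) := by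
  intro δ g hg
  cases hpδ : p δ with
  | none => exact hq δ g (by simpa [union, hpδ] using hg)
  | some g' => exact hp δ g (by simpa [union, hpδ] using hg)

theorem hasWidth_update (hp : HasWidth ξ p) {κ : Ordinal} {c : PartFun} (hc : pdom c = Iio ξ) :
    HasWidth ξ (Function.update p κ (some c)) := by
  intro δ g hg
  by_cases h : δ = κ
  · subst h
    simp only [Function.update_self, Option.some_inj] at hg
    exact hg ▸ hc
  · exact hp δ g (by simpa [Function.update_apply, h] using hg)

theorem laverBound_fill {ξ' : Ordinal} (hS : IsEastonIn S (ldom p)) (hb : LaverBound ξ' p) :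
    LaverBound ξ (fill ξ p) := by
  refine laverBound_map fun δ g hg a b hab => ⟨?_, ?_⟩
  · by_contra ha
    simp [fillOn, ha] at hab
  · have hδ := (hS.1 δ (by simp [ldom, hg])).1.pos
    exact (isFunOn_fillOn hδ fun a b h => (hb δ g hg a b h).2).2 a b hab

theorem fill_le (hb : LaverBound ξ p) : LaverLE (fill ξ p) p :=
  fun δ g hg => ⟨fillOn (Iio ξ) g, by simp only [fill, map, hg, Option.map_some],
    fun a b h => fillOn_of_mem (hb δ g hg a b h).1 h⟩

end Laver

open Laver

/-! ### The splitting map -/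

noncomputable def collapsePart (κ : Ordinal) (p : LaverFun) : PartFun := (p κ).getD fun _ => none

theorem collapsePart_eq {κ : Ordinal} {p : LaverFun} {c : PartFun} (h : p κ = some c) :
    collapsePart κ p = c := by
  simp [collapsePart, h]

theorem collapsePart_bound {κ ξ : Ordinal} {p : LaverFun} (hb : LaverBound ξ p) :
    ∀ a b, collapsePart κ p a = some b → a < ξ ∧ b < κ := by
  cases h : p κ with
  | none => simp [collapsePart, h]
  | some c => exact collapsePart_eq h ▸ hb κ c h

theorem update_collapsePart_le (κ : Ordinal) (p : LaverFun) :
    LaverLE (Function.update p κ (some (collapsePart κ p))) p := by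
  intro δ g hg
  refine ⟨g, ?_, fun _ _ h => h⟩
  by_cases h : δ = κ
  · subst h; simp [collapsePart_eq hg]
  · simp [h, hg]

def IsUniformLaver (μ κ lam : Ordinal) (p : LaverFun) : Prop :=
  IsLaver μ lam p ∧ κ ∈ ldom p ∧ ∃ ξ < μ, HasWidth ξ p

noncomputable def splitLaver (κ : Ordinal) (p : LaverFun) : LaverFun × PartFun × LaverFun :=
  (restrict (Iio κ) p, collapsePart κ p,
    restrict (Ioi κ) (map (fun δ => blockDecode δ (collapsePart κ p)) p))

variable {μ κ lam : Ordinal}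

theorem exists_isUniformLaver_le (hκ : IsRegOrd κ) (hκS : κ ∈ Ioo μ lam) {r : LaverFun}
    (hr : IsLaver μ lam r) : ∃ d, IsUniformLaver μ κ lam d ∧ LaverLE d r := by
  obtain ⟨hrdom, ξ, hξ, hrb⟩ := isLaverOn_iff.1 hr
  set r' := Function.update r κ (some (collapsePart κ r))
  have hdom' : IsEastonIn (Ioo μ lam) (ldom r') := ldom_update ▸ hrdom.insert hκ hκS
  have hb' : LaverBound ξ r' := laverBound_update hrb (collapsePart_bound hrb)
  refine ⟨fill ξ r',
    ⟨isLaverOn_iff.2 ⟨by simpa [fill] using hdom', ξ, hξ, laverBound_fill hdom' hb'⟩,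
    by simp [fill, r', ldom_update], ξ, hξ, hasWidth_fill⟩,
    (fill_le hb').trans (update_collapsePart_le κ r)⟩

theorem splitLaver_mem (hμ : μ.card.ord = μ) (hκ : IsRegOrd κ) (hμκ : μ < κ) {p : LaverFun}
    (hp : IsUniformLaver μ κ lam p) :
    IsLaver μ κ (splitLaver κ p).1 ∧ IsCol μ κ (splitLaver κ p).2.1 ∧
      IsLaver κ lam (splitLaver κ p).2.2 := by
  obtain ⟨hpL, hκp, ξ, hξ, hw⟩ := hp
  obtain ⟨hdom, ξ₀, hξ₀, hb⟩ := isLaverOn_iff.1 hpL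
  obtain ⟨c, hc⟩ := Option.isSome_iff_exists.1 hκp
  have hcb := hb κ c hc
  dsimp only [splitLaver]
  refine ⟨isLaverOn_iff.2 ⟨?_, ξ₀, hξ₀, laverBound_restrict hb⟩, ⟨?_, ?_⟩,
    isLaverOn_iff.2 ⟨?_, blockStart c ξ, ?_, ?_⟩⟩
  · rw [ldom_restrict]
    exact (hdom.inter _).mono_left fun δ h => ⟨h.1.1, h.2⟩
  · intro a b hab
    rw [collapsePart_eq hc] at hab
    exact ⟨(hw.lt hc hab).trans hξ, (hcb a b hab).2⟩
  · rw [collapsePart_eq hc, hw κ c hc, Cardinal.mk_Iio_ordinal, Cardinal.lift_lt]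
    exact Cardinal.lt_ord.1 (hμ.symm ▸ hξ)
  · rw [ldom_restrict, ldom_map]
    exact (hdom.inter _).mono_left fun δ h => ⟨h.2, h.1.2⟩
  · exact blockStart.lt_of_isRegOrd hκ (fun j b h => (hcb j b h).2) (hξ.trans hμκ)
  · refine laverBound_restrict (laverBound_map fun δ u hu a b h => ?_)
    rw [collapsePart_eq hc] at h
    exact blockDecode_bound (fun i v hv => hw.lt hu hv) h

theorem collapsePart_mono {κ : Ordinal} {p q : LaverFun} (hq : κ ∈ ldom q) (h : LaverLE p q) :
    PFunLE (collapsePart κ p) (collapsePart κ q) := by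
  obtain ⟨c, hc⟩ := Option.isSome_iff_exists.1 hq
  obtain ⟨c', hc', hle⟩ := h κ c hc
  rwa [collapsePart_eq hc, collapsePart_eq hc']

theorem splitLaver_mono {ξ : Ordinal} {p q : LaverFun} (hκq : κ ∈ ldom q) (hw : HasWidth ξ q)
    (h : LaverLE p q) :
    LaverLE (splitLaver κ p).1 (splitLaver κ q).1 ∧
      PFunLE (splitLaver κ p).2.1 (splitLaver κ q).2.1 ∧
      LaverLE (splitLaver κ p).2.2 (splitLaver κ q).2.2 := by
  obtain ⟨c, hc⟩ := Option.isSome_iff_exists.1 hκq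
  have hcol := collapsePart_mono hκq h
  refine ⟨restrict_mono h, hcol, restrict_mono (map_mono h fun δ g g' hg _ hle => ?_)⟩
  rw [collapsePart_eq hc] at hcol ⊢
  exact blockDecode_mono (hcol.eqOn_Iio (hw κ c hc)) hle fun i v hv => hw.lt hg hv

theorem le_of_splitLaver_le (hκ : IsRegOrd κ) (hμκ : μ < κ)
    (henum : ∀ δ, IsRegOrd δ → κ < δ → δ < lam → HasEnumsBelow κ δ)
    {p q : LaverFun} (hp : IsUniformLaver μ κ lam p) (hq : IsUniformLaver μ κ lam q)
    (h₁ : LaverLE (splitLaver κ p).1 (splitLaver κ q).1)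
    (h₂ : PFunLE (splitLaver κ p).2.1 (splitLaver κ q).2.1)
    (h₃ : LaverLE (splitLaver κ p).2.2 (splitLaver κ q).2.2) : LaverLE p q := by
  obtain ⟨hpL, hκp, ξp, -, hwp⟩ := hp
  obtain ⟨hqL, hκq, ξq, hξq, hwq⟩ := hq
  obtain ⟨-, ξp₀, -, hbp⟩ := isLaverOn_iff.1 hpL
  obtain ⟨hqdom, ξq₀, -, hbq⟩ := isLaverOn_iff.1 hqL
  obtain ⟨cp, hcp⟩ := Option.isSome_iff_exists.1 hκp
  obtain ⟨cq, hcq⟩ := Option.isSome_iff_exists.1 hκq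
  dsimp only [splitLaver] at h₁ h₂ h₃
  rw [collapsePart_eq hcp, collapsePart_eq hcq] at h₂ h₃
  intro δ g hg
  rcases lt_trichotomy δ κ with hδ | rfl | hδ
  · obtain ⟨g', hg', hle⟩ := h₁ δ g (restrict_eq_some.2 ⟨hδ, hg⟩)
    exact ⟨g', (restrict_eq_some.1 hg').2, hle⟩
  · exact ⟨cp, hcp, Option.some_inj.1 (hcq.symm.trans hg) ▸ h₂⟩
  obtain ⟨G, hG, hle⟩ :=
    h₃ δ (blockDecode δ cq g) (restrict_eq_some.2 ⟨hδ, by simp [Laver.map, hg]⟩)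
  obtain ⟨up, hup, rfl⟩ := Option.map_eq_some_iff.1 (restrict_eq_some.1 hG).2
  obtain ⟨hδreg, -, hδlam⟩ := hqdom.1 δ (by simp [ldom, hg])
  have hξ : ξq ≤ ξp := by
    have := h₂.pdom_subset
    rwa [hwq κ cq hcq, hwp κ cp hcp, Iio_subset_Iio_iff] at this
  refine ⟨up, hup, pfunLE_of_blockDecode (ξ := ξq) (fun i hi => ?_) (h₂.eqOn_Iio (hwq κ cq hcq))
    (fun i v hv => ⟨hwq.lt hg hv, (hbq δ g hg i v hv).2⟩) (fun i hi => ?_) hle⟩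
  · exact hasEnum_block hκ (fun j b h => (hbq κ cq hcq j b h).2) (henum δ hδreg hδ hδlam)
      ((hi.trans hξq).trans hμκ)
  · obtain ⟨v, hv⟩ := Option.isSome_iff_exists.1
      (show i ∈ pdom up from (hwp δ up hup).symm ▸ hi.trans_le hξ)
    exact ⟨v, (hbp δ up hup i v hv).2, hv⟩

theorem laverLE_iff_splitLaver (hκ : IsRegOrd κ) (hμκ : μ < κ)
    (henum : ∀ δ, IsRegOrd δ → κ < δ → δ < lam → HasEnumsBelow κ δ)
    {p q : LaverFun} (hp : IsUniformLaver μ κ lam p) (hq : IsUniformLaver μ κ lam q) :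
    LaverLE p q ↔ LaverLE (splitLaver κ p).1 (splitLaver κ q).1 ∧
      PFunLE (splitLaver κ p).2.1 (splitLaver κ q).2.1 ∧
      LaverLE (splitLaver κ p).2.2 (splitLaver κ q).2.2 := by
  obtain ⟨ξ, -, hw⟩ := hq.2.2
  exact ⟨splitLaver_mono hq.2.1 hw, fun ⟨h₁, h₂, h₃⟩ =>
    le_of_splitLaver_le hκ hμκ henum hp hq h₁ h₂ h₃⟩

noncomputable def glueLaver (κ ξ : Ordinal) (t₁ : LaverFun) (c : PartFun) (t₃ : LaverFun) :
    LaverFun :=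
  Function.update (union (fill ξ t₁) (map (fun δ => blockEncode δ ξ c) t₃)) κ (some c)

section glue

variable {ξ : Ordinal} {t₁ t₃ : LaverFun} {c : PartFun}

theorem isUniformLaver_glueLaver (hκ : IsRegOrd κ) (hκS : κ ∈ Ioo μ lam) (hξ : ξ < μ)
    (h₁ : IsLaver μ κ t₁) (hc : IsFunOn (Iio ξ) κ c) (h₃ : IsLaver κ lam t₃) :
    IsUniformLaver μ κ lam (glueLaver κ ξ t₁ c t₃) := by
  obtain ⟨hdom₁, _, -, hb₁⟩ := isLaverOn_iff.1 h₁
  obtain ⟨hdom₃, -, -, -⟩ := isLaverOn_iff.1 h₃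
  have hdom : IsEastonIn (Ioo μ lam) (ldom (glueLaver κ ξ t₁ c t₃)) := by
    rw [glueLaver, ldom_update, ldom_union, ldom_map, fill, ldom_map]
    refine ((hdom₁.mono_left ?_).union (hdom₃.mono_left ?_)).insert hκ hκS
    · exact fun δ h => ⟨h.1, h.2.trans hκS.2⟩
    · exact fun δ h => ⟨hκS.1.trans h.1, h.2⟩
  have hbc : ∀ a b, c a = some b → a < ξ ∧ b < κ := fun a b h => ⟨hc.mem h, hc.2 a b h⟩
  refine ⟨isLaverOn_iff.2 ⟨hdom, ξ, hξ, laverBound_update (laverBound_union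
    (laverBound_fill hdom₁ hb₁) (laverBound_map fun δ T hT a b h => ?_)) hbc⟩,
    by simp [glueLaver, ldom_update], ξ, hξ,
    hasWidth_update (hasWidth_union hasWidth_fill (hasWidth_map fun δ T => pdom_blockEncode ..))
      hc.1⟩
  exact blockEncode_bound (hdom₃.1 δ (by simp [ldom, hT])).1.pos h

theorem splitLaver_glueLaver_le (hκ : IsRegOrd κ) (hξκ : ξ < κ)
    (henum : ∀ δ, IsRegOrd δ → κ < δ → δ < lam → HasEnumsBelow κ δ)
    (h₁ : IsEastonIn (Ioo μ κ) (ldom t₁)) (hb₁ : LaverBound ξ t₁) (hc : IsFunOn (Iio ξ) κ c)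
    (h₃ : IsEastonIn (Ioo κ lam) (ldom t₃)) (hb₃ : LaverBound (blockStart c ξ) t₃) :
    LaverLE (splitLaver κ (glueLaver κ ξ t₁ c t₃)).1 t₁ ∧
      (splitLaver κ (glueLaver κ ξ t₁ c t₃)).2.1 = c ∧
      LaverLE (splitLaver κ (glueLaver κ ξ t₁ c t₃)).2.2 t₃ := by
  have hcol : collapsePart κ (glueLaver κ ξ t₁ c t₃) = c := collapsePart_eq (by simp [glueLaver])
  dsimp only [splitLaver]
  refine ⟨fun δ g hg => ?_, hcol, fun δ T hT => ?_⟩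
  · have hδ := (h₁.1 δ (by simp [ldom, hg])).2.2
    refine ⟨fillOn (Iio ξ) g, restrict_eq_some.2 ⟨hδ, ?_⟩,
      fun a b h => fillOn_of_mem (hb₁ δ g hg a b h).1 h⟩
    simp [glueLaver, hδ.ne, union, fill, Laver.map, hg]
  · obtain ⟨hδreg, hκδ, hδlam⟩ := h₃.1 δ (by simp [ldom, hT])
    have ht₁ : t₁ δ = none := by
      by_contra h
      exact (h₁.1 δ (Option.ne_none_iff_isSome.1 h)).2.2.not_gt hκδ
    refine ⟨blockDecode δ c (blockEncode δ ξ c T), restrict_eq_some.2 ⟨hκδ, ?_⟩,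
      blockDecode_blockEncode (fun i hi => ?_) (hb₃ δ T hT)⟩
    · rw [Laver.map, hcol]
      simp [glueLaver, hκδ.ne', union, fill, Laver.map, ht₁, hT]
    · exact hasEnum_block hκ (fun j b h => (hc.2 j b h)) (henum δ hδreg hκδ hδlam) (hi.trans hξκ)

end glue

theorem exists_splitLaver_le (hμ : IsRegOrd μ) (hκ : IsRegOrd κ) (hκS : κ ∈ Ioo μ lam)
    (henum : ∀ δ, IsRegOrd δ → κ < δ → δ < lam → HasEnumsBelow κ δ)
    {t₁ : LaverFun} {t₂ : PartFun} {t₃ : LaverFun}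
    (h₁ : IsLaver μ κ t₁) (h₂ : IsCol μ κ t₂) (h₃ : IsLaver κ lam t₃) :
    ∃ p, IsUniformLaver μ κ lam p ∧ LaverLE (splitLaver κ p).1 t₁ ∧
      PFunLE (splitLaver κ p).2.1 t₂ ∧ LaverLE (splitLaver κ p).2.2 t₃ := by
  obtain ⟨hdom₁, ξ₁, hξ₁, hb₁⟩ := isLaverOn_iff.1 h₁
  obtain ⟨ξ₂, hξ₂, hb₂⟩ := h₂.exists_bound hμ
  obtain ⟨hdom₃, ξ₃, hξ₃, hb₃⟩ := isLaverOn_iff.1 h₃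
  set η := max ξ₁ ξ₂
  have hη : η < η + 1 := Order.lt_add_one_iff.2 le_rfl
  have hξ : η + 1 < μ := hμ.isSuccLimit.add_one_lt (max_lt hξ₁ hξ₂)
  -- the value `ξ₃` at `η` makes the blocks of `c` cover the domains of the functions in `t₃`
  set c := fillOn (Iio (η + 1)) (Function.update t₂ η (some ξ₃))
  have hc : IsFunOn (Iio (η + 1)) κ c := by
    refine isFunOn_fillOn hκ.pos fun a b h => ?_
    by_cases ha : a = η
    · subst ha
      simp only [Function.update_self, Option.some_inj] at h
      exact h ▸ hξ₃
    · exact (h₂.1 a b (by simpa [Function.update_apply, ha] using h)).2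
  have hct₂ : PFunLE c t₂ := fun a b h => by
    have ha : a < η := (hb₂ a b h).trans_le (le_max_right _ _)
    exact fillOn_of_mem (ha.trans hη) (by rwa [Function.update_of_ne ha.ne])
  have hcover : ξ₃ ≤ blockStart c (η + 1) := by
    have := blockStart.getD_lt (c := c) hη
    rw [show c η = some ξ₃ from fillOn_of_mem hη (Function.update_self ..)] at this
    exact this.le
  obtain ⟨hle₁, hcol, hle₃⟩ := splitLaver_glueLaver_le hκ (hξ.trans hκS.1) henum hdom₁
    (hb₁.mono (le_max_left _ _ |>.trans hη.le)) hc hdom₃ (hb₃.mono hcover)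
  exact ⟨glueLaver κ (η + 1) t₁ c t₃, isUniformLaver_glueLaver hκ hκS hξ h₁ hc h₃, hle₁,
    by rwa [hcol], hle₃⟩

theorem statement17_general (μ κ lam : Cardinal) (hμ : μ.IsRegular) (hκ : κ.IsRegular)
    (hμκ : μ < κ) (hκlam : κ < lam)
    (hpow : ∀ δ : Ordinal, IsRegOrd δ → κ.ord < δ → δ < lam.ord → δ.card ^< κ = δ.card) :
    ∃ (D : Set LaverFun) (e : LaverFun → LaverFun × PartFun × LaverFun),
      (∀ p ∈ D, IsLaver μ.ord lam.ord p) ∧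
      (∀ p, IsLaver μ.ord lam.ord p → ∃ d ∈ D, LaverLE d p) ∧
      (∀ p ∈ D, IsLaver μ.ord κ.ord (e p).1 ∧ IsCol μ.ord κ.ord (e p).2.1 ∧
        IsLaver κ.ord lam.ord (e p).2.2) ∧
      -- order-isomorphism onto its image
      (∀ p ∈ D, ∀ q ∈ D, (LaverLE p q ↔
        LaverLE (e p).1 (e q).1 ∧ PFunLE (e p).2.1 (e q).2.1 ∧ LaverLE (e p).2.2 (e q).2.2)) ∧
      -- whose image is dense in the product
      (∀ t : LaverFun × PartFun × LaverFun, IsLaver μ.ord κ.ord t.1 →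
        IsCol μ.ord κ.ord t.2.1 → IsLaver κ.ord lam.ord t.2.2 →
        ∃ p ∈ D, LaverLE (e p).1 t.1 ∧ PFunLE (e p).2.1 t.2.1 ∧ LaverLE (e p).2.2 t.2.2) := by
  have hμ' := isRegOrd_ord hμ
  have hκ' := isRegOrd_ord hκ
  have hκS : κ.ord ∈ Ioo μ.ord lam.ord := ⟨Cardinal.ord_lt_ord.2 hμκ, Cardinal.ord_lt_ord.2 hκlam⟩
  have henum : ∀ δ, IsRegOrd δ → κ.ord < δ → δ < lam.ord → HasEnumsBelow κ.ord δ :=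
    fun δ hδ hκδ hδlam => hasEnumsBelow_of_powerlt hδ.pos.ne' (hpow δ hδ hκδ hδlam)
  refine ⟨{p | IsUniformLaver μ.ord κ.ord lam.ord p}, splitLaver κ.ord, fun p hp => hp.1,
    fun p hp => exists_isUniformLaver_le hκ' hκS hp,
    fun p hp => splitLaver_mem hμ'.2 hκ' hκS.1 hp,
    fun p hp q hq => laverLE_iff_splitLaver hκ' hκS.1 henum hp hq,
    fun t h₁ h₂ h₃ => exists_splitLaver_le hμ' hκ' hκS henum h₁ h₂ h₃⟩

/-- For regular `μ < κ < λ` with `λ` inaccessible (and `δ^{<κ} = δ` for regular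
`δ ∈ (κ, λ)`), the Laver collapse `𝕃(μ, λ)` is forcing-equivalent to
`𝕃(μ, κ) × Col(μ, κ) × 𝕃(κ, λ)`: there is a dense embedding (an order-isomorphism
onto a dense subset of the product) defined on a dense subset of `𝕃(μ, λ)`. -/
theorem statement17 (μ κ lam : Cardinal) (hμ : μ.IsRegular) (hκ : κ.IsRegular)
    (hlam : lam.IsInaccessible) (hμκ : μ < κ) (hκlam : κ < lam)
    (hpow : ∀ δ : Ordinal, IsRegOrd δ → κ.ord < δ → δ < lam.ord → δ.card ^< κ = δ.card) :
    ∃ (D : Set LaverFun) (e : LaverFun → LaverFun × PartFun × LaverFun),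
      (∀ p ∈ D, IsLaver μ.ord lam.ord p) ∧
      (∀ p, IsLaver μ.ord lam.ord p → ∃ d ∈ D, LaverLE d p) ∧
      (∀ p ∈ D, IsLaver μ.ord κ.ord (e p).1 ∧ IsCol μ.ord κ.ord (e p).2.1 ∧
        IsLaver κ.ord lam.ord (e p).2.2) ∧
      -- order-isomorphism onto its image
      (∀ p ∈ D, ∀ q ∈ D, (LaverLE p q ↔
        LaverLE (e p).1 (e q).1 ∧ PFunLE (e p).2.1 (e q).2.1 ∧ LaverLE (e p).2.2 (e q).2.2)) ∧
      -- whose image is dense in the product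
      (∀ t : LaverFun × PartFun × LaverFun, IsLaver μ.ord κ.ord t.1 →
        IsCol μ.ord κ.ord t.2.1 → IsLaver κ.ord lam.ord t.2.2 →
        ∃ p ∈ D, LaverLE (e p).1 t.1 ∧ PFunLE (e p).2.1 t.2.1 ∧ LaverLE (e p).2.2 t.2.2) :=
  statement17_general μ κ lam hμ hκ hμκ hκlam hpow
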